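/- arXiv:1608.00154 — 2 statements merged into one kernel-verified Lean document; each statement's English description precedes it below -/
import Mathlib

section
/- Let $k_0, L, \sigma, l_c, r_0 > 0$ and define the quadratic covariance approximation $C(x) = \sigma^2 l_c(1 - |x|^2/(2l_c^2))$. Then the Gaussian integral $$\frac{r_0^2}{4\pi}\int_{\mathbb{R}^2}\exp\Big(-\frac{r_0^2|\xi|^2}{4} + \frac{k_0^2}{4}\int_0^L\big[C(x - \xi z/k_0) - C(0)\big]dz\Big)d\xi$$ equals $$\frac{1}{1 + \frac{\sigma^2 L^3}{6 r_0^2 l_c}}\exp\Big(-\frac{1 + \frac{\sigma^2 L^3}{24 r_0^2 l_c}}{1 + \frac{\sigma^2 L^3}{6 r_0^2 l_c}}\cdot\frac{\sigma^2 k_0^2 L}{8 l_c}|x|^2\Big)$$ for every $x \in \mathbb{R}^2$. -/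
/-! For the quadratic covariance, `C y - C 0 = -(σ² / (2 lc)) ‖y‖²`, so the `z`-integral is an
explicit quadratic polynomial in `ξ` and the integrand is `exp (-A ‖ξ‖² + B ⟪x, ξ⟫)` up to a factor
depending only on `x`. Completing the square and translation invariance of Lebesgue measure reduce
this to `∫ exp (-A ‖ξ‖²) = π / A` in dimension two. -/

open MeasureTheory Real
open scoped RealInnerProductSpace

theorem integral_rexp_neg_mul_sq_norm_add {V : Type*} [NormedAddCommGroup V]
    [InnerProductSpace ℝ V] [FiniteDimensional ℝ V] [MeasurableSpace V] [BorelSpace V]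
    {b : ℝ} (hb : 0 < b) (c : ℝ) (w : V) :
    ∫ v : V, rexp (-b * ‖v‖ ^ 2 + c * ⟪w, v⟫) =
      (π / b) ^ (Module.finrank ℝ V / 2 : ℝ) * rexp (c ^ 2 * ‖w‖ ^ 2 / (4 * b)) := by
  have complete_sq : ∀ v : V, rexp (-b * ‖v‖ ^ 2 + c * ⟪w, v⟫) =
      rexp (c ^ 2 * ‖w‖ ^ 2 / (4 * b)) * rexp (-b * ‖v - (c / (2 * b)) • w‖ ^ 2) := by
    intro v
    rw [← Real.exp_add, norm_sub_sq_real, inner_smul_right, norm_smul, mul_pow,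
      Real.norm_eq_abs, sq_abs, real_inner_comm]
    congr 1
    field_simp
    ring
  simp_rw [complete_sq]
  rw [integral_const_mul, integral_sub_right_eq_self (fun v => rexp (-b * ‖v‖ ^ 2)),
    GaussianFourier.integral_rexp_neg_mul_sq_norm hb, mul_comm]

theorem integral_norm_sub_smul_sq {E : Type*} [NormedAddCommGroup E]
    [InnerProductSpace ℝ E] (x v : E) (L : ℝ) :
    ∫ z in (0 : ℝ)..L, ‖x - z • v‖ ^ 2 = L * ‖x‖ ^ 2 - L ^ 2 * ⟪x, v⟫ + L ^ 3 / 3 * ‖v‖ ^ 2 := by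
  have expand : ∀ z : ℝ, ‖x - z • v‖ ^ 2 = ‖x‖ ^ 2 - 2 * ⟪x, v⟫ * z + ‖v‖ ^ 2 * z ^ 2 := by
    intro z
    rw [norm_sub_sq_real, inner_smul_right, norm_smul, mul_pow, Real.norm_eq_abs, sq_abs]
    ring
  simp_rw [expand]
  have integrable : ∀ f : ℝ → ℝ, Continuous f → IntervalIntegrable f volume 0 L :=
    fun f hf => hf.intervalIntegrable 0 L
  rw [intervalIntegral.integral_add (integrable _ (by fun_prop)) (integrable _ (by fun_prop)),
    intervalIntegral.integral_sub (integrable _ (by fun_prop)) (integrable _ (by fun_prop)),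
    intervalIntegral.integral_const, intervalIntegral.integral_const_mul, integral_id,
    intervalIntegral.integral_const_mul, integral_pow, smul_eq_mul]
  ring

theorem stmt2_general (k0 L σ lc r0 : ℝ) (hk0 : 0 < k0) (hL : 0 < L)
    (hlc : 0 < lc) (hr0 : 0 < r0)
    (C : EuclideanSpace ℝ (Fin 2) → ℝ)
    (hC : ∀ x, C x = σ ^ 2 * lc * (1 - ‖x‖ ^ 2 / (2 * lc ^ 2)))
    (x : EuclideanSpace ℝ (Fin 2)) :
    (r0 ^ 2 / (4 * π)) *
      ∫ ξ : EuclideanSpace ℝ (Fin 2),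
        Real.exp (-(r0 ^ 2 * ‖ξ‖ ^ 2 / 4)
          + (k0 ^ 2 / 4) * ∫ z in (0:ℝ)..L, (C (x - (z / k0) • ξ) - C 0))
    = (1 / (1 + σ ^ 2 * L ^ 3 / (6 * r0 ^ 2 * lc))) *
      Real.exp (-((1 + σ ^ 2 * L ^ 3 / (24 * r0 ^ 2 * lc)) /
          (1 + σ ^ 2 * L ^ 3 / (6 * r0 ^ 2 * lc))) *
        (σ ^ 2 * k0 ^ 2 * L / (8 * lc)) * ‖x‖ ^ 2) := by
  set a := σ ^ 2 / (2 * lc) with ha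
  set A := r0 ^ 2 / 4 + a * L ^ 3 / 12 with hA_def
  set B := a * k0 * L ^ 2 / 4 with hB_def
  have hA : 0 < A := by positivity
  have hC_sub : ∀ y, C y - C 0 = -a * ‖y‖ ^ 2 := fun y => by
    rw [hC, hC, norm_zero, ha]
    field_simp
    ring
  have hintegrand : ∀ ξ : EuclideanSpace ℝ (Fin 2),
      rexp (-(r0 ^ 2 * ‖ξ‖ ^ 2 / 4) + (k0 ^ 2 / 4) * ∫ z in (0:ℝ)..L, (C (x - (z / k0) • ξ) - C 0))
        = rexp (-(a * k0 ^ 2 * L / 4) * ‖x‖ ^ 2) * rexp (-A * ‖ξ‖ ^ 2 + B * ⟪x, ξ⟫) := fun ξ => by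
    simp_rw [hC_sub]
    rw [intervalIntegral.integral_const_mul]
    simp_rw [div_eq_mul_inv _ k0, mul_smul]
    rw [integral_norm_sub_smul_sq, inner_smul_right, norm_smul, mul_pow, norm_inv,
      Real.norm_eq_abs, inv_pow, sq_abs, ← Real.exp_add]
    congr 1
    field_simp
    ring
  simp_rw [hintegrand]
  rw [integral_const_mul, integral_rexp_neg_mul_sq_norm_add hA, finrank_euclideanSpace_fin,
    Nat.cast_ofNat, div_self two_ne_zero, rpow_one]
  have hprefactor : r0 ^ 2 / (4 * A) = 1 / (1 + σ ^ 2 * L ^ 3 / (6 * r0 ^ 2 * lc)) := by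
    rw [hA_def, ha]
    field_simp
    ring
  have hexponent : -(a * k0 ^ 2 * L / 4) * ‖x‖ ^ 2 + B ^ 2 * ‖x‖ ^ 2 / (4 * A) =
      -((1 + σ ^ 2 * L ^ 3 / (24 * r0 ^ 2 * lc)) / (1 + σ ^ 2 * L ^ 3 / (6 * r0 ^ 2 * lc))) *
        (σ ^ 2 * k0 ^ 2 * L / (8 * lc)) * ‖x‖ ^ 2 := by
    rw [hA_def, hB_def, ha]
    field_simp
    ring
  rw [← hprefactor, ← hexponent, Real.exp_add]
  field_simp

theorem stmt2 (k0 L σ lc r0 : ℝ) (hk0 : 0 < k0) (hL : 0 < L) (hσ : 0 < σ)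
    (hlc : 0 < lc) (hr0 : 0 < r0)
    (C : EuclideanSpace ℝ (Fin 2) → ℝ)
    (hC : ∀ x, C x = σ ^ 2 * lc * (1 - ‖x‖ ^ 2 / (2 * lc ^ 2)))
    (x : EuclideanSpace ℝ (Fin 2)) :
    (r0 ^ 2 / (4 * π)) *
      ∫ ξ : EuclideanSpace ℝ (Fin 2),
        Real.exp (-(r0 ^ 2 * ‖ξ‖ ^ 2 / 4)
          + (k0 ^ 2 / 4) * ∫ z in (0:ℝ)..L, (C (x - (z / k0) • ξ) - C 0))
    = (1 / (1 + σ ^ 2 * L ^ 3 / (6 * r0 ^ 2 * lc))) *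
      Real.exp (-((1 + σ ^ 2 * L ^ 3 / (24 * r0 ^ 2 * lc)) /
          (1 + σ ^ 2 * L ^ 3 / (6 * r0 ^ 2 * lc))) *
        (σ ^ 2 * k0 ^ 2 * L / (8 * lc)) * ‖x‖ ^ 2) :=
  stmt2_general k0 L σ lc r0 hk0 hL hlc hr0 C hC x
end

section
/- Let $\sigma, L, l_c, k_0, r_0 > 0$ and set $\alpha_L = \frac{L}{2 k_0 r_0^2(1 + \frac{\sigma^2 L^3}{24 r_0^2 l_c})}$. With $C(x) = \sigma^2 l_c(1 - |x|^2/(2l_c^2))$, for every $b, x \in \mathbb{R}^2$: $$\frac{r_0^2}{4\pi}\int_{\mathbb{R}^2}\exp\Big(-\frac{r_0^2}{4}\big|\xi - \frac{b}{r_0^2}\big|^2 + \frac{k_0^2}{4}\int_0^L\big[C(x - \xi z/k_0) - C(0)\big]dz\Big)d\xi = \frac{1}{1 + \frac{\sigma^2 L^3}{6 r_0^2 l_c}}\exp\Big(-\frac{|b|^2}{4 r_0^2}\cdot\frac{\frac{\sigma^2 L^3}{24 l_c}}{r_0^2 + \frac{\sigma^2 L^3}{24 l_c}}\Big)\exp\Big(-\frac{|x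 - \alpha_L b|^2}{2 R_{tr}^2}\Big),$$ where $R_{tr}^2 = \frac{4 l_c}{\sigma^2 k_0^2 L}\cdot\frac{1 + \frac{\sigma^2 L^3}{6 r_0^2 l_c}}{1 + \frac{\sigma^2 L^3}{24 r_0^2 l_c}}$. -/
open MeasureTheory Real
open scoped RealInnerProductSpace

/-! Since `C y - C 0 = -σ² ‖y‖² / (2 l_c)`, the inner `z`-integral is a quadratic polynomial in
`(x, ξ)`, so the integrand is `exp (-A ‖ξ‖² + ⟪w, ξ⟫ + c)` with `A = r₀²/4 + σ² L³ / (24 l_c)`.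
Completing the square and translating `ξ` reduces the `ξ`-integral to the standard Gaussian
integral, giving `(π / A) exp (‖w‖² / (4 A) + c)`; what remains is algebra in `‖b‖²`, `⟪x, b⟫`
and `‖x‖²`. -/

section InnerProductSpace
variable {V : Type*} [NormedAddCommGroup V] [InnerProductSpace ℝ V]

lemma norm_smul_sq_real (t : ℝ) (v : V) : ‖t • v‖ ^ 2 = t ^ 2 * ‖v‖ ^ 2 := by
  rw [norm_smul, mul_pow, Real.norm_eq_abs, sq_abs]

lemma neg_mul_sq_norm_add_inner_eq {A : ℝ} (hA : A ≠ 0) (w v : V) :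
    -A * ‖v‖ ^ 2 + ⟪w, v⟫ = -A * ‖v - (2 * A)⁻¹ • w‖ ^ 2 + ‖w‖ ^ 2 / (4 * A) := by
  rw [norm_sub_sq_real, real_inner_smul_right, norm_smul_sq_real, real_inner_comm]
  field_simp
  ring

lemma intervalIntegral_sq_norm_sub_smul (x v : V) (L : ℝ) :
    ∫ z in (0 : ℝ)..L, ‖x - z • v‖ ^ 2 = L * ‖x‖ ^ 2 - L ^ 2 * ⟪x, v⟫ + L ^ 3 / 3 * ‖v‖ ^ 2 := by
  have h : ∀ z : ℝ, ‖x - z • v‖ ^ 2 = ‖x‖ ^ 2 - 2 * ⟪x, v⟫ * z + ‖v‖ ^ 2 * z ^ 2 := fun z => by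
    rw [norm_sub_sq_real, real_inner_smul_right, norm_smul_sq_real]; ring
  simp_rw [h]
  rw [intervalIntegral.integral_add, intervalIntegral.integral_sub,
    intervalIntegral.integral_const_mul, intervalIntegral.integral_const_mul,
    intervalIntegral.integral_const, integral_id, integral_pow]
  · simp only [smul_eq_mul]; ring
  all_goals exact (by fun_prop : Continuous _).intervalIntegrable _ _

theorem integral_rexp_neg_mul_sq_norm_add_inner_add [FiniteDimensional ℝ V] [MeasurableSpace V]
    [BorelSpace V] {A : ℝ} (hA : 0 < A) (w : V) (c : ℝ) :
    ∫ v : V, rexp (-A * ‖v‖ ^ 2 + ⟪w, v⟫ + c) =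
      (π / A) ^ (Module.finrank ℝ V / 2 : ℝ) * rexp (‖w‖ ^ 2 / (4 * A) + c) := by
  simp_rw [neg_mul_sq_norm_add_inner_eq hA.ne', add_assoc _ (‖w‖ ^ 2 / (4 * A)), exp_add _ (_ + c),
    integral_mul_const, integral_sub_right_eq_self (fun v => rexp (-A * ‖v‖ ^ 2)),
    GaussianFourier.integral_rexp_neg_mul_sq_norm hA]

lemma focal_exponent_eq {σ lc k0 r0 : ℝ} (hlc : lc ≠ 0) (hk0 : k0 ≠ 0) (hr0 : r0 ≠ 0) (L : ℝ)
    (C : V → ℝ) (hC : ∀ x, C x = σ ^ 2 * lc * (1 - ‖x‖ ^ 2 / (2 * lc ^ 2))) (b x ξ : V) :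
    -(r0 ^ 2 / 4 * ‖ξ - (r0 ^ 2)⁻¹ • b‖ ^ 2)
        + (k0 ^ 2 / 4) * ∫ z in (0:ℝ)..L, (C (x - (z / k0) • ξ) - C 0)
      = -(r0 ^ 2 / 4 + σ ^ 2 * L ^ 3 / (24 * lc)) * ‖ξ‖ ^ 2
        + ⟪(1 / 2 : ℝ) • b + (σ ^ 2 * k0 * L ^ 2 / (8 * lc)) • x, ξ⟫
        + (-(‖b‖ ^ 2 / (4 * r0 ^ 2)) - σ ^ 2 * k0 ^ 2 * L / (8 * lc) * ‖x‖ ^ 2) := by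
  have hCsub : ∀ y, C y - C 0 = -(σ ^ 2 / (2 * lc)) * ‖y‖ ^ 2 := fun y => by
    rw [hC, hC, norm_zero]; field_simp; ring
  have hsmul : ∀ z : ℝ, (z / k0) • ξ = z • (k0⁻¹ • ξ) := fun z => by
    rw [div_eq_mul_inv, mul_smul]
  simp only [hCsub, hsmul, intervalIntegral.integral_const_mul, intervalIntegral_sq_norm_sub_smul]
  simp only [norm_sub_sq_real, inner_add_left, real_inner_smul_right, norm_smul_sq_real,
    real_inner_comm]
  field_simp
  ring

lemma focal_exponent_complete_sq {σ L lc k0 r0 αL Rtr2 : ℝ} (hσ : 0 < σ) (hL : 0 < L)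
    (hlc : 0 < lc) (hk0 : 0 < k0) (hr0 : 0 < r0)
    (hαL : αL = L / (2 * k0 * r0 ^ 2 * (1 + σ ^ 2 * L ^ 3 / (24 * r0 ^ 2 * lc))))
    (hRtr : Rtr2 = (4 * lc / (σ ^ 2 * k0 ^ 2 * L)) *
      ((1 + σ ^ 2 * L ^ 3 / (6 * r0 ^ 2 * lc)) / (1 + σ ^ 2 * L ^ 3 / (24 * r0 ^ 2 * lc))))
    (b x : V) :
    ‖(1 / 2 : ℝ) • b + (σ ^ 2 * k0 * L ^ 2 / (8 * lc)) • x‖ ^ 2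
          / (4 * (r0 ^ 2 / 4 + σ ^ 2 * L ^ 3 / (24 * lc)))
        + (-(‖b‖ ^ 2 / (4 * r0 ^ 2)) - σ ^ 2 * k0 ^ 2 * L / (8 * lc) * ‖x‖ ^ 2)
      = -(‖b‖ ^ 2 / (4 * r0 ^ 2)) *
          (σ ^ 2 * L ^ 3 / (24 * lc) / (r0 ^ 2 + σ ^ 2 * L ^ 3 / (24 * lc)))
        + -‖x - αL • b‖ ^ 2 / (2 * Rtr2) := by
  simp only [norm_add_sq_real, norm_sub_sq_real, real_inner_smul_right, norm_smul_sq_real, real_inner_comm, hαL, hRtr]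
  field_simp
  ring

end InnerProductSpace

theorem stmt7 (σ L lc k0 r0 αL Rtr2 : ℝ)
    (hσ : 0 < σ) (hL : 0 < L) (hlc : 0 < lc) (hk0 : 0 < k0) (hr0 : 0 < r0)
    (hαL : αL = L / (2 * k0 * r0 ^ 2 * (1 + σ ^ 2 * L ^ 3 / (24 * r0 ^ 2 * lc))))
    (hRtr : Rtr2 = (4 * lc / (σ ^ 2 * k0 ^ 2 * L)) *
      ((1 + σ ^ 2 * L ^ 3 / (6 * r0 ^ 2 * lc)) /
        (1 + σ ^ 2 * L ^ 3 / (24 * r0 ^ 2 * lc))))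
    (C : EuclideanSpace ℝ (Fin 2) → ℝ)
    (hC : ∀ x, C x = σ ^ 2 * lc * (1 - ‖x‖ ^ 2 / (2 * lc ^ 2)))
    (b x : EuclideanSpace ℝ (Fin 2)) :
    (r0 ^ 2 / (4 * π)) *
      ∫ ξ : EuclideanSpace ℝ (Fin 2),
        Real.exp (-(r0 ^ 2 / 4 * ‖ξ - (r0 ^ 2)⁻¹ • b‖ ^ 2)
          + (k0 ^ 2 / 4) * ∫ z in (0:ℝ)..L, (C (x - (z / k0) • ξ) - C 0))
    = (1 / (1 + σ ^ 2 * L ^ 3 / (6 * r0 ^ 2 * lc))) *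
      Real.exp (-(‖b‖ ^ 2 / (4 * r0 ^ 2)) *
        ((σ ^ 2 * L ^ 3 / (24 * lc)) / (r0 ^ 2 + σ ^ 2 * L ^ 3 / (24 * lc)))) *
      Real.exp (-‖x - αL • b‖ ^ 2 / (2 * Rtr2)) := by
  have hA : 0 < r0 ^ 2 / 4 + σ ^ 2 * L ^ 3 / (24 * lc) := by positivity
  have hscale : r0 ^ 2 / (4 * π) * (π / (r0 ^ 2 / 4 + σ ^ 2 * L ^ 3 / (24 * lc)))
      = 1 / (1 + σ ^ 2 * L ^ 3 / (6 * r0 ^ 2 * lc)) := by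
    field_simp; ring
  simp_rw [focal_exponent_eq hlc.ne' hk0.ne' hr0.ne' L C hC b x]
  rw [integral_rexp_neg_mul_sq_norm_add_inner_add hA, finrank_euclideanSpace_fin,
    focal_exponent_complete_sq hσ hL hlc hk0 hr0 hαL hRtr, exp_add, ← mul_assoc, ← mul_assoc]
  norm_num [hscale]
end
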